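/- arXiv:1005.2657 — 3 statements merged into one kernel-verified Lean document; each statement's English description precedes it below -/
import Mathlib

section
/- For all natural numbers m, n with n > m and all x ∈ T, |a_n(x + 1/2 + mα mod 1) + a_n(x)| ≤ 2m. -/
/-!
Since `f(y + 1/2) = -f(y)`, the sum `a_n(x + 1/2 + mα)` is minus the Birkhoff sum of `f` along
the orbit of `x` over the window `[m, m + n)`. Adding `a_n(x)`, the sum over the common part
`[m, n)` cancels and only the two end pieces `[0, m)` and `[n, n + m)` survive, each of
absolute value at most `m` because `|f| ≤ 1`.
-/

open Set Filter MeasureTheory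

/-- The step function `f : 𝕋 → ℤ`, `f x = 1` on `[0,1/2)` and `-1` on `[1/2,1)`,
viewed as a `1`-periodic function on `ℝ` via `Int.fract`. -/
noncomputable def stepf (x : ℝ) : ℤ := if Int.fract x < 1/2 then 1 else -1

/-- The Birkhoff sum `a_n(x) = ∑_{i=0}^{n-1} f(x + iα mod 1)`. -/
noncomputable def birk (α : ℝ) (n : ℕ) (x : ℝ) : ℤ :=
  ∑ i ∈ Finset.range n, stepf (x + i * α)

open Finset

lemma stepf_add_half (y : ℝ) : stepf (y + 1/2) = -stepf y := by
  have h0 := Int.fract_nonneg y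
  have h1 := Int.fract_lt_one y
  unfold stepf
  by_cases hy : Int.fract y < 1/2
  · have hfract : Int.fract (y + 1/2) = Int.fract y + 1/2 :=
      Int.fract_eq_iff.2 ⟨by linarith, by linarith, ⌊y⌋, by rw [← Int.self_sub_fract]; ring⟩
    rw [if_pos hy, hfract, if_neg (by linarith)]
  · have hfract : Int.fract (y + 1/2) = Int.fract y - 1/2 :=
      Int.fract_eq_iff.2
        ⟨by linarith, by linarith, ⌊y⌋ + 1, by push_cast; rw [← Int.self_sub_fract]; ring⟩
    rw [if_neg hy, hfract, if_pos (by linarith), neg_neg]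

lemma abs_stepf_le_one (y : ℝ) : |stepf y| ≤ 1 := by
  unfold stepf; split <;> simp

section ShiftedSums

variable {G : Type*} [AddCommGroup G]

lemma sum_range_shift_sub_sum_range (g : ℕ → G) (m n : ℕ) :
    ∑ i ∈ range n, g (m + i) - ∑ i ∈ range n, g i
      = ∑ i ∈ range m, g (n + i) - ∑ i ∈ range m, g i := by
  have h := (sum_range_add g m n).symm.trans (add_comm n m ▸ sum_range_add g n m)
  rw [sub_eq_sub_iff_add_eq_add, add_comm, h, add_comm]

variable [LinearOrder G] [IsOrderedAddMonoid G]

lemma abs_sum_range_le_nsmul {g : ℕ → G} {C : G} (hg : ∀ i, |g i| ≤ C) (n : ℕ) :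
    |∑ i ∈ range n, g i| ≤ n • C :=
  calc |∑ i ∈ range n, g i| ≤ ∑ i ∈ range n, |g i| := abs_sum_le_sum_abs _ _
    _ ≤ #(range n) • C := sum_le_card_nsmul _ _ _ fun i _ ↦ hg i
    _ = n • C := by rw [card_range]

lemma abs_sum_range_shift_sub_sum_range_le {g : ℕ → G} {C : G} (hg : ∀ i, |g i| ≤ C)
    (m n : ℕ) : |∑ i ∈ range n, g (m + i) - ∑ i ∈ range n, g i| ≤ (2 * m) • C := by
  rw [sum_range_shift_sub_sum_range, two_mul, add_nsmul]
  exact (abs_sub _ _).trans <| add_le_add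
    (abs_sum_range_le_nsmul (fun i ↦ hg (n + i)) m) (abs_sum_range_le_nsmul hg m)

end ShiftedSums

lemma birk_add_half_add_mul (α x : ℝ) (m n : ℕ) :
    birk α n (x + 1/2 + m * α) = -∑ i ∈ range n, stepf (x + ↑(m + i) * α) := by
  rw [birk, ← sum_neg_distrib]
  refine sum_congr rfl fun i _ ↦ ?_
  rw [← stepf_add_half]
  congr 1
  push_cast
  ring

theorem stmt4_general (α : ℝ) (m n : ℕ)
    (x : ℝ) :
    |birk α n (x + 1/2 + m * α) + birk α n x| ≤ 2 * (m : ℤ) := by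
  have h := abs_sum_range_shift_sub_sum_range_le (fun i ↦ abs_stepf_le_one (x + i * α)) m n
  rwa [nsmul_one, Nat.cast_mul, Nat.cast_ofNat, ← abs_neg, neg_sub, sub_eq_neg_add,
    ← birk_add_half_add_mul, birk] at h

/-- For all naturals `m < n` and all `x ∈ 𝕋`, `|a_n(x + 1/2 + mα mod 1) + a_n(x)| ≤ 2m`. -/
theorem stmt4 (α : ℝ) (hα : Irrational α) (m n : ℕ) (hmn : m < n)
    (x : ℝ) (hx : x ∈ Set.Ico (0:ℝ) 1) :
    |birk α n (x + 1/2 + m * α) + birk α n x| ≤ 2 * (m : ℤ) :=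
  stmt4_general α m n x
end

section
/- (Denjoy–Koksma inequality for the step function f) If p, q are positive integers with gcd(p,q) = 1 and |α - p/q| < 1/q², then for every x ∈ T, |a_q(x)| < 4, where a_q(x) = Σ_{i=0}^{q-1} f(x + iα mod 1). -/
open Set Filter MeasureTheory

/-! Since `f y = 1 + 2⌊y⌋ - 2⌊y + 1/2⌋`, the Birkhoff sum is `a_q(x) = q + 2 S(x) - 2 S(x + 1/2)`
with `S(y) = ∑_{i<q} ⌊y + iα⌋`. For `α = p/q` the residues of `⌊qy⌋ + ip` run through all classes
mod `q`, which gives the Hermite-type identity `S(y) = ⌊qy⌋ + (p-1)(q-1)/2`. For general `α` the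
drifts `i(α - p/q)`, `i < q`, all have the same sign and size at most `1/q`, so `S` is squeezed
between the rational sums at two points `1/q` apart: `S(y) - ⌊qy⌋` takes at most two consecutive
values. Since also `|q - 2(⌊qx + q/2⌋ - ⌊qx⌋)| ≤ 1`, we get `|a_q(x)| ≤ 3`. -/

open Finset

noncomputable def floorSum (α : ℝ) (n : ℕ) (y : ℝ) : ℤ :=
  ∑ i ∈ range n, ⌊y + i * α⌋

theorem stepf_eq_floor (y : ℝ) : stepf y = 1 + 2 * ⌊y⌋ - 2 * ⌊y + 1 / 2⌋ := by
  have h₁ := Int.floor_le y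
  have h₂ := Int.lt_floor_add_one y
  unfold stepf Int.fract
  split_ifs with h
  · have : ⌊y + 1 / 2⌋ = ⌊y⌋ := Int.floor_eq_iff.2 ⟨by linarith, by linarith⟩
    omega
  · have : ⌊y + 1 / 2⌋ = ⌊y⌋ + 1 :=
      Int.floor_eq_iff.2 ⟨by push_cast; linarith, by push_cast; linarith⟩
    omega

theorem birk_eq_floorSum (α : ℝ) (n : ℕ) (x : ℝ) :
    birk α n x = n + 2 * floorSum α n x - 2 * floorSum α n (x + 1 / 2) := by
  simp only [birk, floorSum, stepf_eq_floor, sum_sub_distrib, sum_add_distrib, ← mul_sum,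
    sum_const, card_range, nsmul_eq_mul, mul_one, add_right_comm x]

theorem floorSum_le_floorSum {α β y z : ℝ} {n : ℕ} (h : ∀ i < n, y + i * α ≤ z + i * β) :
    floorSum α n y ≤ floorSum β n z :=
  sum_le_sum fun i hi ↦ Int.floor_mono (h i (mem_range.1 hi))

namespace Nat.Coprime

variable {p q : ℕ}

theorem sum_range_add_mul_emod (hcop : p.Coprime q) (hq : 0 < q) (m : ℤ) :
    ∑ i ∈ range q, (m + i * p) % (q : ℤ) = ∑ i ∈ range q, (i : ℤ) := by
  have hq0 : (q : ℤ) ≠ 0 := by exact_mod_cast hq.ne'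
  set e : ℕ → ℕ := fun i ↦ ((m + i * p) % q).toNat
  have he : ∀ i, (e i : ℤ) = (m + i * p) % q := fun i ↦
    Int.toNat_of_nonneg (Int.emod_nonneg _ hq0)
  have hmaps : Set.MapsTo e (Finset.range q) (Finset.range q) := fun i _ ↦ by
    have := he i
    have := Int.emod_lt_of_pos (m + i * p) (by omega : (0 : ℤ) < q)
    simp only [coe_range, Set.mem_Iio]
    omega
  have hinj : Set.InjOn e (Finset.range q) := by
    intro i hi j hj hij
    simp only [coe_range, Set.mem_Iio] at hi hj
    have hdvd : (q : ℤ) ∣ (j - i) * p := by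
      have := (Int.modEq_iff_dvd.1 (show m + i * p ≡ m + j * p [ZMOD q] by
        rw [Int.ModEq, ← he, ← he, hij]))
      convert this using 1; ring
    have := Int.eq_zero_of_abs_lt_dvd
      ((Nat.isCoprime_iff_coprime.2 hcop.symm).dvd_of_dvd_mul_right hdvd) (by rw [abs_lt]; omega)
    omega
  exact sum_nbij e hmaps hinj (surjOn_of_injOn_of_card_le e hmaps hinj le_rfl) fun i _ ↦ (he i).symm

theorem two_mul_sum_range_add_mul_ediv (hcop : p.Coprime q) (hq : 0 < q) (m : ℤ) :
    2 * ∑ i ∈ range q, (m + i * p) / (q : ℤ) = 2 * m + (p - 1) * (q - 1) := by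
  have hq0 : (q : ℤ) ≠ 0 := by exact_mod_cast hq.ne'
  have hid : (∑ i ∈ range q, (i : ℤ)) * 2 = q * (q - 1) := by
    have := congrArg (Nat.cast : ℕ → ℤ) (sum_range_id_mul_two q)
    push_cast [Nat.cast_sub hq] at this
    exact this
  apply mul_left_cancel₀ hq0
  calc (q : ℤ) * (2 * ∑ i ∈ range q, (m + i * p) / (q : ℤ))
      = 2 * ∑ i ∈ range q, (m + i * p - (m + i * p) % q) := by
        rw [mul_left_comm, mul_sum]
        congr 1
        exact sum_congr rfl fun i _ ↦ by rw [Int.emod_def]; ring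
    _ = 2 * (q * m + (p - 1) * ∑ i ∈ range q, (i : ℤ)) := by
        rw [sum_sub_distrib, hcop.sum_range_add_mul_emod hq, sum_add_distrib, ← sum_mul, sum_const,
          card_range, nsmul_eq_mul]
        ring
    _ = q * (2 * m + (p - 1) * (q - 1)) := by linear_combination (p - 1 : ℤ) * hid

theorem two_mul_floorSum_div (hcop : p.Coprime q) (hq : 0 < q) (y : ℝ) :
    2 * floorSum (p / q) q y = 2 * ⌊q * y⌋ + (p - 1) * (q - 1) := by
  have hfloor : ∀ i : ℕ, ⌊y + i * (p / q : ℝ)⌋ = (⌊q * y⌋ + i * p) / (q : ℤ) := fun i ↦ by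
    rw [show y + i * (p / q : ℝ) = (q * y + ((i * p : ℕ) : ℤ)) / q by field_simp; push_cast; ring,
      Int.floor_div_natCast, Int.floor_add_intCast]
    push_cast; rfl
  simp only [floorSum, hfloor]
  exact hcop.two_mul_sum_range_add_mul_ediv hq _

end Nat.Coprime

theorem abs_two_mul_floor_add_half_sub_floor_sub_le (a : ℝ) (n : ℕ) :
    |2 * (⌊a + n / 2⌋ - ⌊a⌋) - n| ≤ 1 := by
  have h₁ : 2 * (⌊a + n / 2⌋ - ⌊a⌋) - n < 2 := by
    have : ((2 * (⌊a + n / 2⌋ - ⌊a⌋) - n : ℤ) : ℝ) < 2 := by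
      push_cast; linarith [Int.floor_le (a + n / 2), Int.lt_floor_add_one a]
    exact_mod_cast this
  have h₂ : -2 < 2 * (⌊a + n / 2⌋ - ⌊a⌋) - n := by
    have : (-2 : ℝ) < ((2 * (⌊a + n / 2⌋ - ⌊a⌋) - n : ℤ) : ℝ) := by
      push_cast; linarith [Int.floor_le a, Int.lt_floor_add_one (a + n / 2)]
    exact_mod_cast this
  rw [abs_le]
  constructor <;> omega

theorem exists_floorSum_sub_floor_mem_Icc {α : ℝ} {p q : ℕ} (hcop : p.Coprime q) (hq : 0 < q)
    (happrox : |α - p / q| ≤ 1 / (q : ℝ) ^ 2) :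
    ∃ c : ℤ, ∀ y : ℝ, floorSum α q y - ⌊q * y⌋ ∈ Set.Icc c (c + 1) := by
  have hqR : (0 : ℝ) < q := by exact_mod_cast hq
  have hstep : ∀ i < q, |(i : ℝ) * (α - p / q)| ≤ 1 / q := fun i hi ↦ by
    rw [abs_mul, Nat.abs_cast]
    calc (i : ℝ) * |α - p / q| ≤ q * (1 / q ^ 2) :=
          mul_le_mul (by exact_mod_cast hi.le) happrox (abs_nonneg _) hqR.le
      _ = 1 / q := by field_simp
  obtain ⟨a, ha⟩ : ∃ a : ℤ, ∀ i < q,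
      (a : ℝ) / q ≤ i * (α - p / q) ∧ i * (α - p / q) ≤ ((a + 1 : ℤ) : ℝ) / q := by
    rcases le_total 0 (α - p / q) with hθ | hθ
    · refine ⟨0, fun i hi ↦ ⟨?_, ?_⟩⟩
      · simpa using mul_nonneg (Nat.cast_nonneg i) hθ
      · simpa using (abs_le.1 (hstep i hi)).2
    · refine ⟨-1, fun i hi ↦ ⟨?_, ?_⟩⟩
      · simpa [neg_div] using (abs_le.1 (hstep i hi)).1
      · simpa using mul_nonpos_of_nonneg_of_nonpos (Nat.cast_nonneg i) hθ
  have hshift : ∀ y : ℝ, ∀ k : ℤ, ⌊q * (y + k / q)⌋ = ⌊q * y⌋ + k := fun y k ↦ by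
    rw [mul_add, mul_div_cancel₀ _ hqR.ne', Int.floor_add_intCast]
  have hrat := hcop.two_mul_floorSum_div hq
  refine ⟨(p - 1) * (q - 1) / 2 + a, fun y ↦ ?_⟩
  have hlo : floorSum (p / q) q (y + a / q) ≤ floorSum α q y :=
    floorSum_le_floorSum fun i hi ↦ by linarith [(ha i hi).1]
  have hhi : floorSum α q y ≤ floorSum (p / q) q (y + ((a + 1 : ℤ) : ℝ) / q) :=
    floorSum_le_floorSum fun i hi ↦ by linarith [(ha i hi).2]
  have h₀ := hrat y
  have h₁ := hrat (y + a / q)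
  have h₂ := hrat (y + ((a + 1 : ℤ) : ℝ) / q)
  rw [hshift] at h₁ h₂
  constructor <;> omega

theorem stmt5_general (α : ℝ) (p q : ℕ) (hq : 0 < q)
    (hcop : Nat.Coprime p q) (happrox : |α - (p : ℝ) / q| < 1 / (q : ℝ) ^ 2)
    (x : ℝ) :
    |birk α q x| < 4 := by
  obtain ⟨c, hc⟩ := exists_floorSum_sub_floor_mem_Icc hcop hq happrox.le
  have hcx := hc x
  have hcx' := hc (x + 1 / 2)
  have hhalf := abs_two_mul_floor_add_half_sub_floor_sub_le (q * x) q
  rw [show (q : ℝ) * (x + 1 / 2) = q * x + q / 2 by ring] at hcx'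
  rw [abs_le] at hhalf
  rw [birk_eq_floorSum, abs_lt]
  simp only [Set.mem_Icc] at hcx hcx'
  constructor <;> omega

/-- Denjoy–Koksma inequality for the step function `f`: if `|α - p/q| < 1/q²` with
`gcd(p,q) = 1`, then `|a_q(x)| < 4` for every `x ∈ 𝕋`. -/
theorem stmt5 (α : ℝ) (hα : Irrational α) (p q : ℕ) (hp : 0 < p) (hq : 0 < q)
    (hcop : Nat.Coprime p q) (happrox : |α - (p : ℝ) / q| < 1 / (q : ℝ) ^ 2)
    (x : ℝ) (hx : x ∈ Set.Ico (0:ℝ) 1) :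
    |birk α q x| < 4 :=
  stmt5_general α p q hq hcop happrox x
end

section
/- Let q = q_k, q⁺ = q_{k+1}, q⁺⁺ = q_{k+2} be consecutive convergent denominators of irrational α. If q⁺ < 3q and q⁺⁺ < 3q, then for every integer j with 0 < |j| < q, ‖2jα‖ > 1/(6q). -/
/-!
Since `|2j| < 2q_k ≤ q_{k+2}`, the best-approximation property of the convergents gives
`‖2jα‖ ≥ |q_{k+1}α - p_{k+1}|`, and the latter exceeds `1/(2q_{k+2}) > 1/(6q_k)`.
Best approximation comes from writing `(m, p) = A (q_{k+1}, p_{k+1}) + B (q_{k+2}, p_{k+2})` with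
integers `A, B` (the determinant is `±1`): `|m| < q_{k+2}` forces `A ≠ 0` and `AB ≤ 0`, while the
errors `q_{k+1}α - p_{k+1}` and `q_{k+2}α - p_{k+2}` have opposite signs, so the two terms of
`mα - p = A (q_{k+1}α - p_{k+1}) + B (q_{k+2}α - p_{k+2})` do not cancel.
-/

noncomputable def nearInt (y : ℝ) : ℝ := |y - round y|

noncomputable def gaussIter (α : ℝ) : ℕ → ℝ
  | 0 => Int.fract α
  | n + 1 => Int.fract (gaussIter α n)⁻¹

noncomputable def cfAq (α : ℝ) (k : ℕ) : ℕ := (⌊(gaussIter α k)⁻¹⌋).toNat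

noncomputable def cfQ (α : ℝ) : ℕ → ℕ
  | 0 => 1
  | 1 => cfAq α 0
  | n + 2 => cfAq α (n + 1) * cfQ α (n + 1) + cfQ α n

noncomputable def cfP (α : ℝ) : ℕ → ℤ
  | 0 => ⌊α⌋
  | 1 => cfAq α 0 * ⌊α⌋ + 1
  | n + 2 => cfAq α (n + 1) * cfP α (n + 1) + cfP α n

theorem abs_mul_sub_le_of_isUnit_det (α : ℝ) {q₁ q₂ p₁ p₂ m p : ℤ}
    (hdet : IsUnit (p₂ * q₁ - p₁ * q₂)) (hq₁ : 0 ≤ q₁)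
    (hsign : (q₁ * α - p₁) * (q₂ * α - p₂) ≤ 0) (hm0 : m ≠ 0) (hm : |m| < q₂) :
    |q₁ * α - p₁| ≤ |m * α - p| := by
  have hq₂ : 0 < q₂ := (abs_pos.2 hm0).trans hm
  obtain ⟨A, B, hmAB, hpAB⟩ : ∃ A B : ℤ, A * q₁ + B * q₂ = m ∧ A * p₁ + B * p₂ = p := by
    have hd := Int.isUnit_mul_self hdet
    exact ⟨(p₂ * q₁ - p₁ * q₂) * (m * p₂ - p * q₂), (p₂ * q₁ - p₁ * q₂) * (q₁ * p - p₁ * m),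
      by linear_combination m * hd, by linear_combination p * hd⟩
  have hA : A ≠ 0 := by
    rintro rfl
    have hB : B ≠ 0 := by rintro rfl; simp_all
    have : q₂ ≤ |m| := by
      rw [← hmAB, zero_mul, zero_add, abs_mul, abs_of_nonneg hq₂.le]
      exact le_mul_of_one_le_left hq₂.le (Int.one_le_abs hB)
    omega
  have hAB : A * B ≤ 0 := by
    by_contra! hAB
    have hB : B ≠ 0 := by rintro rfl; simp at hAB
    have hsum : |A * q₁ + B * q₂| = |A * q₁| + |B * q₂| :=
      (abs_add_eq_add_abs_iff _ _).2 <| mul_nonneg_iff.1 <| by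
        nlinarith [mul_nonneg hq₁ hq₂.le]
    have : q₂ ≤ |B * q₂| := by
      rw [abs_mul, abs_of_nonneg hq₂.le]
      exact le_mul_of_one_le_left hq₂.le (Int.one_le_abs hB)
    rw [← hmAB, hsum] at hm
    have := abs_nonneg (A * q₁)
    omega
  have hsplit : (m : ℝ) * α - p = A * (q₁ * α - p₁) + B * (q₂ * α - p₂) := by
    rw [← hmAB, ← hpAB]; push_cast; ring
  have hsame : 0 ≤ (A * (q₁ * α - p₁)) * (B * (q₂ * α - p₂)) := by
    have hAB' : (A : ℝ) * B ≤ 0 := by exact_mod_cast hAB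
    nlinarith
  have hA1 : (1 : ℝ) ≤ |(A : ℝ)| := by exact_mod_cast Int.one_le_abs hA
  calc |q₁ * α - p₁| ≤ |(A : ℝ)| * |q₁ * α - p₁| := le_mul_of_one_le_left (abs_nonneg _) hA1
    _ ≤ |A * (q₁ * α - p₁)| + |B * (q₂ * α - p₂)| := by
        rw [abs_mul]; exact le_add_of_nonneg_right (abs_nonneg _)
    _ = |(m : ℝ) * α - p| := by
        rw [hsplit, (abs_add_eq_add_abs_iff _ _).2 (mul_nonneg_iff.1 hsame)]

theorem irrational_gaussIter {α : ℝ} (hα : Irrational α) : ∀ k, Irrational (gaussIter α k)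
  | 0 => by simpa [gaussIter, ← Int.self_sub_floor] using hα.sub_intCast ⌊α⌋
  | k + 1 => by
    simpa [gaussIter, ← Int.self_sub_floor] using
      (irrational_gaussIter hα k).inv.sub_intCast ⌊(gaussIter α k)⁻¹⌋

theorem gaussIter_pos {α : ℝ} (hα : Irrational α) : ∀ k, 0 < gaussIter α k
  | 0 => Int.fract_pos.2 (hα.ne_int _)
  | k + 1 => Int.fract_pos.2 ((irrational_gaussIter hα k).inv.ne_int _)

theorem gaussIter_lt_one (α : ℝ) : ∀ k, gaussIter α k < 1
  | 0 => Int.fract_lt_one _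
  | _ + 1 => Int.fract_lt_one _

theorem one_le_floor_inv_gaussIter {α : ℝ} (hα : Irrational α) (k : ℕ) :
    1 ≤ ⌊(gaussIter α k)⁻¹⌋ :=
  Int.le_floor.2 <| by
    exact_mod_cast (one_le_inv₀ (gaussIter_pos hα k)).2 (gaussIter_lt_one α k).le

theorem one_le_cfAq {α : ℝ} (hα : Irrational α) (k : ℕ) : 1 ≤ cfAq α k := by
  have := one_le_floor_inv_gaussIter hα k
  unfold cfAq; omega

theorem cfAq_cast {α : ℝ} (hα : Irrational α) (k : ℕ) :
    (cfAq α k : ℝ) = ⌊(gaussIter α k)⁻¹⌋ := by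
  have := one_le_floor_inv_gaussIter hα k
  rw [cfAq, ← Int.cast_natCast, Int.toNat_of_nonneg (by omega)]

theorem gaussIter_mul_gaussIter_succ {α : ℝ} (hα : Irrational α) (k : ℕ) :
    gaussIter α k * gaussIter α (k + 1) = 1 - cfAq α k * gaussIter α k := by
  have hne := (gaussIter_pos hα k).ne'
  rw [cfAq_cast hα, gaussIter, ← Int.self_sub_floor]
  field_simp

theorem one_le_cfQ {α : ℝ} (hα : Irrational α) : ∀ k, 1 ≤ cfQ α k
  | 0 => le_rfl
  | 1 => one_le_cfAq hα 0
  | k + 2 => le_add_left (one_le_cfQ hα k)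

theorem cfQ_le_cfQ_succ {α : ℝ} (hα : Irrational α) : ∀ k, cfQ α k ≤ cfQ α (k + 1)
  | 0 => one_le_cfAq hα 0
  | k + 1 => le_add_right (Nat.le_mul_of_pos_left _ (one_le_cfAq hα (k + 1)))

theorem two_mul_cfQ_le_cfQ_add_two {α : ℝ} (hα : Irrational α) (k : ℕ) :
    2 * cfQ α k ≤ cfQ α (k + 2) := by
  have h₁ := cfQ_le_cfQ_succ hα k
  have h₂ : cfQ α (k + 1) ≤ cfAq α (k + 1) * cfQ α (k + 1) :=
    Nat.le_mul_of_pos_left _ (one_le_cfAq hα (k + 1))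
  change 2 * cfQ α k ≤ cfAq α (k + 1) * cfQ α (k + 1) + cfQ α k
  omega

theorem cfP_succ_mul_cfQ_sub (α : ℝ) :
    ∀ n, cfP α (n + 1) * cfQ α n - cfP α n * cfQ α (n + 1) = (-1) ^ n
  | 0 => by simp [cfP, cfQ]; ring
  | n + 1 => by
    have ih := cfP_succ_mul_cfQ_sub α n
    simp only [cfP, cfQ] at ih ⊢
    push_cast
    linear_combination -ih

noncomputable def cfErr (α : ℝ) (k : ℕ) : ℝ := cfQ α k * α - cfP α k

theorem cfErr_succ {α : ℝ} (hα : Irrational α) :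
    ∀ n, cfErr α (n + 1) = -gaussIter α (n + 1) * cfErr α n
  | 0 => by
    have h₀ : gaussIter α 0 = α - ⌊α⌋ := (Int.self_sub_floor α).symm
    have := gaussIter_mul_gaussIter_succ hα 0
    simp only [cfErr, cfQ, cfP]
    push_cast
    rw [h₀] at this
    linear_combination this
  | n + 1 => by
    have ih := cfErr_succ hα n
    have := gaussIter_mul_gaussIter_succ hα (n + 1)
    have hrec : cfErr α (n + 2) = cfAq α (n + 1) * cfErr α (n + 1) + cfErr α n := by
      simp only [cfErr, cfQ, cfP]; push_cast; ring
    rw [hrec, ih]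
    linear_combination -cfErr α n * this

theorem cfErr_ne_zero {α : ℝ} (hα : Irrational α) (k : ℕ) : cfErr α k ≠ 0 :=
  ((hα.natCast_mul (Nat.one_le_iff_ne_zero.1 (one_le_cfQ hα k))).sub_intCast _).ne_zero

theorem abs_cfErr_succ_lt {α : ℝ} (hα : Irrational α) (n : ℕ) :
    |cfErr α (n + 1)| < |cfErr α n| := by
  rw [cfErr_succ hα, abs_mul, abs_neg, abs_of_pos (gaussIter_pos hα _)]
  exact mul_lt_of_lt_one_left (abs_pos.2 (cfErr_ne_zero hα n)) (gaussIter_lt_one α _)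

theorem cfErr_mul_cfErr_succ_neg {α : ℝ} (hα : Irrational α) (n : ℕ) :
    cfErr α n * cfErr α (n + 1) < 0 := by
  rw [cfErr_succ hα]
  have := gaussIter_pos hα (n + 1)
  have := mul_self_pos.2 (cfErr_ne_zero hα n)
  nlinarith

theorem one_div_two_mul_cfQ_succ_lt_abs_cfErr {α : ℝ} (hα : Irrational α) (n : ℕ) :
    1 / (2 * cfQ α (n + 1)) < |cfErr α n| := by
  have hdet : (cfQ α (n + 1) : ℝ) * cfErr α n - cfQ α n * cfErr α (n + 1) = (-1) ^ n := by
    have := congrArg (Int.cast : ℤ → ℝ) (cfP_succ_mul_cfQ_sub α n)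
    push_cast at this
    simp only [cfErr]
    linear_combination this
  have hone : (1 : ℝ) ≤ cfQ α (n + 1) * |cfErr α n| + cfQ α n * |cfErr α (n + 1)| := by
    calc (1 : ℝ) = |(cfQ α (n + 1) : ℝ) * cfErr α n - cfQ α n * cfErr α (n + 1)| := by
          rw [hdet]; simp
      _ ≤ _ := (abs_sub _ _).trans_eq (by rw [abs_mul, abs_mul, Nat.abs_cast, Nat.abs_cast])
  have hq : (cfQ α n : ℝ) ≤ cfQ α (n + 1) := by exact_mod_cast cfQ_le_cfQ_succ hα n
  have hq₁ : (0 : ℝ) < cfQ α (n + 1) := by exact_mod_cast one_le_cfQ hα (n + 1)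
  have hlt := abs_cfErr_succ_lt hα n
  rw [div_lt_iff₀ (by positivity)]
  nlinarith [abs_nonneg (cfErr α (n + 1))]

theorem abs_cfErr_le_abs_mul_sub {α : ℝ} (hα : Irrational α) (k : ℕ) {m : ℤ} (p : ℤ)
    (hm0 : m ≠ 0) (hm : |m| < cfQ α (k + 2)) :
    |cfErr α (k + 1)| ≤ |m * α - p| := by
  have hdet : IsUnit (cfP α (k + 2) * cfQ α (k + 1) - cfP α (k + 1) * cfQ α (k + 2)) := by
    rw [cfP_succ_mul_cfQ_sub, Int.isUnit_iff]
    exact neg_one_pow_eq_or ℤ _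
  have hsign := (cfErr_mul_cfErr_succ_neg hα (k + 1)).le
  simp only [cfErr] at hsign ⊢
  exact_mod_cast abs_mul_sub_le_of_isUnit_det α hdet (Int.natCast_nonneg _)
    (by exact_mod_cast hsign) hm0 hm

theorem stmt10_general (α : ℝ) (hα : Irrational α) (k : ℕ) (q qpp : ℕ)
    (hq : q = cfQ α k) (hqpp : qpp = cfQ α (k + 2))
    (h2 : qpp < 3 * q)
    (j : ℤ) (hj0 : 0 < |j|) (hj : |j| < (q : ℤ)) :
    nearInt (2 * (j : ℝ) * α) > 1 / (6 * (q : ℝ)) := by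
  subst hq hqpp
  have hm : |2 * j| < cfQ α (k + 2) := by
    have := two_mul_cfQ_le_cfQ_add_two hα k
    rw [abs_mul, abs_two]
    omega
  have hbest : |cfErr α (k + 1)| ≤ nearInt (2 * j * α) := by
    simpa [nearInt] using abs_cfErr_le_abs_mul_sub hα k (round (2 * (j : ℝ) * α))
      (mul_ne_zero two_ne_zero (abs_pos.1 hj0)) hm
  have h2' : (cfQ α (k + 2) : ℝ) < 3 * cfQ α k := by exact_mod_cast h2
  have hqpp : (0 : ℝ) < cfQ α (k + 2) := by exact_mod_cast one_le_cfQ hα (k + 2)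
  calc 1 / (6 * (cfQ α k : ℝ)) < 1 / (2 * cfQ α (k + 2)) :=
        one_div_lt_one_div_of_lt (by positivity) (by linarith)
    _ < |cfErr α (k + 1)| := one_div_two_mul_cfQ_succ_lt_abs_cfErr hα (k + 1)
    _ ≤ nearInt (2 * j * α) := hbest

/-- If `q = q_k`, `q⁺ = q_{k+1}`, `q⁺⁺ = q_{k+2}` are consecutive convergent denominators of
irrational `α` with `q⁺ < 3q` and `q⁺⁺ < 3q`, then for every integer `j` with `0 < |j| < q`,
`‖2jα‖ > 1/(6q)`. -/
theorem stmt10 (α : ℝ) (hα : Irrational α) (k : ℕ) (q qp qpp : ℕ)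
    (hq : q = cfQ α k) (hqp : qp = cfQ α (k + 1)) (hqpp : qpp = cfQ α (k + 2))
    (h1 : qp < 3 * q) (h2 : qpp < 3 * q)
    (j : ℤ) (hj0 : 0 < |j|) (hj : |j| < (q : ℤ)) :
    nearInt (2 * (j : ℝ) * α) > 1 / (6 * (q : ℝ)) :=
  stmt10_general α hα k q qpp hq hqpp h2 j hj0 hj
end
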